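/- arXiv:0710.0706 — 2 statements merged into one kernel-verified Lean document; each statement's English description precedes it below -/
import Mathlib

section
/- Let σ : A → A be a nontrivial continuous endomorphism of A = ℂ⟦z₁,z₂⟧ with decomposition (g,h₁,h₂), and suppose some prime element p dividing g is of type II relative to σ. Then for every n ≥ 1 there exist (necessarily unique, since A is a domain and g ≠ 0) elements h_{n1}, h_{n2} ∈ A with σⁿ(zᵢ) = zᵢ + g·h_{ni} for i = 1,2; moreover h_{n1} and h_{n2} are relatively prime, (h_{n1}, h_{n2}) = (h₁, h₂) as ideals of A, and h_{ni} − n·hᵢ ∈ (p)·(h₁,h₂) for i = 1,2. -/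
noncomputable section

/-- `A` is the ring `ℂ⟦z₁,z₂⟧` of formal power series in two variables over `ℂ`. -/
abbrev A : Type := MvPowerSeries (Fin 2) ℂ

/-- The variables `z₁`, `z₂` (indexed by `Fin 2`). -/
def z (i : Fin 2) : A := MvPowerSeries.X i

/-- The maximal ideal `𝔪 = (z₁, z₂)` of `A`, i.e. the power series with zero constant term. -/
def mA : Ideal A := RingHom.ker (MvPowerSeries.constantCoeff : A →+* ℂ)

/-- A map `σ : A → A` is continuous (for the `𝔪`-adic topology) iff `σ 𝔪 ⊆ 𝔪`. -/
def ContEndo (σ : A → A) : Prop := ∀ f ∈ mA, σ f ∈ mA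

/-- `(g, h₁, h₂)` is a decomposition of `σ`: `g ≠ 0`, `h₁, h₂` relatively prime and
`σ zᵢ = zᵢ + g·hᵢ`. -/
def IsDecomposition (σ : A → A) (g h₁ h₂ : A) : Prop :=
  g ≠ 0 ∧ IsRelPrime h₁ h₂ ∧ σ (z 0) = z 0 + g * h₁ ∧ σ (z 1) = z 1 + g * h₂

/-- The formal partial derivative `∂f/∂zᵢ`. -/
def pd (i : Fin 2) (f : A) : A :=
  fun m => ((m i : ℕ) + 1 : ℂ) * MvPowerSeries.coeff (m + Finsupp.single i 1) f

/-- A prime element `p` (dividing `g`) is of type II relative to a decomposition `(g,h₁,h₂)`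
if `h₁ = -a·(∂p/∂z₂) + p·q₁` and `h₂ = a·(∂p/∂z₁) + p·q₂` for some `a, q₁, q₂`. -/
def IsTypeII (p h₁ h₂ : A) : Prop :=
  ∃ a q₁ q₂ : A, h₁ = -a * pd 1 p + p * q₁ ∧ h₂ = a * pd 0 p + p * q₂

/-- `multOrd p x = max { m : ℕ | x ∈ (p)^m }`. -/
def multOrd (p x : A) : ℕ := sSup {m : ℕ | x ∈ Ideal.span {p} ^ m}

open MvPowerSeries

/-!
Write `Δᵢ = σ(zᵢ) - zᵢ = g·hᵢ` and `J = (Δ₁, Δ₂)`. Since `σ f = f(z + Δ)`, Taylor's formula gives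
`σ f - f - Σ Δᵢ·∂ᵢf ∈ J²`. The remainder satisfies the Leibniz rule modulo `J²`, so this holds for
polynomials, and it passes to all power series because `J²` is closed in the `𝔪`-adic topology
(Krull's intersection theorem). Hence `σ x - x ∈ J ⊆ (p)·(h₁,h₂)` for every `x`, and
`σ g = g·(1 + Σ hᵢ·∂ᵢg + g·u)`; the type II condition makes `Σ hᵢ·∂ᵢg` divisible by `p`, so
`σ g ∈ g·(1 + (p))`. Induction on `n` then gives `σⁿ(zᵢ) = zᵢ + g·hₙᵢ` with
`hₙᵢ ≡ n·hᵢ mod (p)·(h₁,h₂)`. As `n` is a unit and `p` lies in the maximal ideal, Nakayama's lemma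
gives `(hₙ₁,hₙ₂) = (h₁,h₂)`, and relative primality follows.
-/

theorem Derivation.apply_mem_pow_of_mem_pow_succ {R S : Type*} [CommRing R] [CommRing S]
    [Algebra R S] (D : Derivation R S S) (I : Ideal S) {n : ℕ} {x : S} (hx : x ∈ I ^ (n + 1)) :
    D x ∈ I ^ n := by
  induction n generalizing x with
  | zero => simp
  | succ n ih =>
    rw [pow_succ] at hx
    refine Submodule.mul_induction_on hx (fun a ha b hb => ?_) (fun x y hx hy => ?_)
    · rw [D.leibniz, smul_eq_mul, smul_eq_mul]
      exact add_mem (Ideal.mul_mem_right _ _ ha) (pow_succ' I n ▸ Ideal.mul_mem_mul hb (ih ha))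
    · rw [map_add]
      exact add_mem hx hy

theorem Ideal.mem_of_forall_mem_sup_pow {R : Type*} [CommRing R] [IsNoetherianRing R]
    {I J : Ideal R} (hI : I ≤ Ideal.jacobson ⊥) {x : R} (hx : ∀ n : ℕ, x ∈ J ⊔ I ^ n) :
    x ∈ J := by
  rw [← Ideal.Quotient.eq_zero_iff_mem, ← Submodule.mem_bot R,
    ← Ideal.iInf_pow_smul_eq_bot_of_le_jacobson (M := R ⧸ J) I hI, Submodule.mem_iInf]
  intro n
  obtain ⟨j, hj, y, hy, rfl⟩ := Submodule.mem_sup.mp (hx n)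
  rw [Ideal.smul_top_eq_map, Submodule.restrictScalars_mem, map_add,
    Ideal.Quotient.eq_zero_iff_mem.mpr hj, zero_add]
  exact Ideal.mem_map_of_mem _ hy

theorem Ideal.span_pair_eq_of_sub_mem {R : Type*} [CommRing R] {P : Ideal R}
    (hP : P ≤ Ideal.jacobson ⊥) {u : R} (hu : IsUnit u) {h₁ h₂ k₁ k₂ : R}
    (hk₁ : k₁ - u * h₁ ∈ P * Ideal.span {h₁, h₂}) (hk₂ : k₂ - u * h₂ ∈ P * Ideal.span {h₁, h₂}) :
    Ideal.span {k₁, k₂} = Ideal.span {h₁, h₂} := by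
  set I := Ideal.span {h₁, h₂}
  have mem_I : ∀ {h k : R}, h ∈ I → k - u * h ∈ P * I → k ∈ I := fun {h k} hh hk => by
    simpa using add_mem (Ideal.mul_le_right hk) (Ideal.mul_mem_left I u hh)
  have mem_sup : ∀ {h k : R}, k ∈ Ideal.span {k₁, k₂} → k - u * h ∈ P * I →
      h ∈ Ideal.span {k₁, k₂} ⊔ P • I := fun {h k} hk hkh => by
    obtain ⟨v, rfl⟩ := hu
    rw [← v.inv_mul_cancel_left h, ← sub_sub_cancel k (v * h)]
    exact Ideal.mul_mem_left _ _ (sub_mem (Submodule.mem_sup_left hk) (Submodule.mem_sup_right hkh))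
  refine le_antisymm (Ideal.span_le.mpr ?_) (Submodule.le_of_le_smul_of_le_jacobson_bot
    (Submodule.fg_span (Set.toFinite _)) hP (Ideal.span_le.mpr ?_))
  all_goals simp only [Set.insert_subset_iff, Set.singleton_subset_iff, SetLike.mem_coe]
  · exact ⟨mem_I (Ideal.subset_span (by simp)) hk₁, mem_I (Ideal.subset_span (by simp)) hk₂⟩
  · exact ⟨mem_sup (Ideal.subset_span (by simp)) hk₁, mem_sup (Ideal.subset_span (by simp)) hk₂⟩

theorem IsRelPrime.of_span_pair_le {R : Type*} [CommRing R] {a b c d : R} (h : IsRelPrime a b)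
    (hspan : Ideal.span {a, b} ≤ Ideal.span {c, d}) : IsRelPrime c d := by
  intro u huc hud
  have hdvd : ∀ x ∈ Ideal.span {c, d}, u ∣ x := fun x hx => by
    obtain ⟨r, s, rfl⟩ := Ideal.mem_span_pair.mp hx
    exact dvd_add (dvd_mul_of_dvd_right huc r) (dvd_mul_of_dvd_right hud s)
  exact h (hdvd a (hspan (Ideal.subset_span (by simp))))
    (hdvd b (hspan (Ideal.subset_span (by simp))))

theorem exists_iterate_eq_add_mul {R F : Type*} [CommRing R] [FunLike F R R] [RingHomClass F R R]
    (σ : F) {I : Ideal R} {p g t z h : R} (hmove : ∀ x, σ x - x ∈ Ideal.span {p} * I)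
    (hg : σ g = g * (1 + p * t)) (hz : σ z = z + g * h) (hh : h ∈ I) (n : ℕ) :
    ∃ k, σ^[n] z = z + g * k ∧ k - n * h ∈ Ideal.span {p} * I := by
  induction n with
  | zero => exact ⟨0, by simp, by simp⟩
  | succ n ih =>
    obtain ⟨k, hk, hkh⟩ := ih
    have hkI : k ∈ I := by
      simpa using add_mem (Ideal.mul_le_right hkh) (Ideal.mul_mem_left I (n : R) hh)
    have hσkI : σ k ∈ I := by simpa using add_mem (Ideal.mul_le_right (hmove k)) hkI
    refine ⟨h + (1 + p * t) * σ k, ?_, ?_⟩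
    · rw [Function.iterate_succ_apply', hk, map_add, map_mul, hz, hg]
      ring
    · have : h + (1 + p * t) * σ k - (n + 1 : ℕ) * h
          = (σ k - k) + p * (t * σ k) + (k - n * h) := by
        push_cast
        ring
      rw [this]
      exact add_mem (add_mem (hmove k)
        (Ideal.mul_mem_mul (Ideal.mem_span_singleton_self p) (Ideal.mul_mem_left _ _ hσkI))) hkh

namespace MvPowerSeries

variable {ι R : Type*} [CommRing R]

theorem sub_truncTotal_mem_pow_span_X [Finite ι] (n : ℕ) (f : MvPowerSeries ι R) :
    f - (truncTotal n f : MvPowerSeries ι R) ∈ Ideal.span (Set.range X) ^ n := by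
  rcases eq_or_ne n 0 with rfl | hn
  · simp
  have htrunc : truncTotal n (f - (truncTotal n f : MvPowerSeries ι R)) = 0 := by
    rw [map_sub, (truncTotal_coe_eq_self_iff _ hn).mpr (totalDegree_truncTotal_lt f hn), sub_self]
  have hker : toAdicCompletionAlgEquiv ι R (f - truncTotal n f) ∈
      MvPolynomial.idealOfVars ι R ^ n • (⊤ : Submodule (MvPolynomial ι R) _) := by
    rw [AdicCompletion.pow_smul_top_eq_ker_eval (MvPolynomial.idealOfVars_fg ι R),
      LinearMap.mem_ker, AdicCompletion.eval_apply, toAdicCompletionAlgEquiv_apply,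
      toAdicCompletion_apply_eq_mk_truncTotal, htrunc, map_zero]
  have hmem := Submodule.mem_map_of_mem (f := (toAdicCompletionAlgEquiv ι R).symm.toLinearMap) hker
  rw [Submodule.map_smul'', Submodule.map_top,
    LinearMap.range_eq_top.mpr (toAdicCompletionAlgEquiv ι R).symm.surjective,
    AlgEquiv.toLinearMap_apply, AlgEquiv.symm_apply_apply, Ideal.smul_top_eq_map,
    Submodule.restrictScalars_mem, Ideal.map_pow, Ideal.map_span, ← Set.range_comp] at hmem
  have hX : ⇑(algebraMap (MvPolynomial ι R) (MvPowerSeries ι R)) ∘ MvPolynomial.X = X :=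
    funext MvPolynomial.coe_X
  rwa [hX] at hmem

theorem span_range_X_le_jacobson [IsLocalRing R] :
    Ideal.span (Set.range (X : ι → MvPowerSeries ι R)) ≤ Ideal.jacobson ⊥ := by
  refine le_trans (Ideal.span_le.mpr ?_) (IsLocalRing.maximalIdeal_le_jacobson _)
  rintro _ ⟨i, rfl⟩
  simp [IsLocalRing.mem_maximalIdeal, mem_nonunits_iff, isUnit_iff_constantCoeff]

theorem map_mem_pow_span_X {φ : MvPowerSeries ι R →ₐ[R] MvPowerSeries ι R}
    (hφ : ∀ i, φ (X i) ∈ Ideal.span (Set.range X)) {n : ℕ} {f : MvPowerSeries ι R}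
    (hf : f ∈ Ideal.span (Set.range X) ^ n) : φ f ∈ Ideal.span (Set.range X) ^ n := by
  have hmap : Ideal.map φ (Ideal.span (Set.range X)) ≤ Ideal.span (Set.range X) := by
    rw [Ideal.map_span, Ideal.span_le]
    rintro _ ⟨_, ⟨i, rfl⟩, rfl⟩
    exact hφ i
  have := Ideal.mem_map_of_mem φ hf
  rw [Ideal.map_pow] at this
  exact Ideal.pow_right_mono hmap _ this

variable [Fintype ι] (φ : MvPowerSeries ι R →ₐ[R] MvPowerSeries ι R)

def displacementIdeal : Ideal (MvPowerSeries ι R) := Ideal.span (Set.range fun i => φ (X i) - X i)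

def taylorRemainder (f : MvPowerSeries ι R) : MvPowerSeries ι R :=
  φ f - f - ∑ i, (φ (X i) - X i) * pderiv R i f

theorem taylorRemainder_add (f g : MvPowerSeries ι R) :
    taylorRemainder φ (f + g) = taylorRemainder φ f + taylorRemainder φ g := by
  simp only [taylorRemainder, map_add, mul_add, Finset.sum_add_distrib]
  ring

theorem taylorRemainder_mul (f g : MvPowerSeries ι R) :
    taylorRemainder φ (f * g) = f * taylorRemainder φ g + g * taylorRemainder φ f
      + (φ f - f) * (φ g - g) := by
  have hsum : ∑ i, (φ (X i) - X i) * pderiv R i (f * g)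
      = f * ∑ i, (φ (X i) - X i) * pderiv R i g + g * ∑ i, (φ (X i) - X i) * pderiv R i f := by
    simp only [Derivation.leibniz, smul_eq_mul, Finset.mul_sum, ← Finset.sum_add_distrib]
    exact Finset.sum_congr rfl fun i _ => by ring
  rw [taylorRemainder, taylorRemainder, taylorRemainder, hsum, map_mul]
  ring

theorem taylorRemainder_C (r : R) : taylorRemainder φ (C r) = 0 := by
  simp [taylorRemainder, c_eq_algebraMap]

theorem taylorRemainder_X (i : ι) : taylorRemainder φ (X i) = 0 := by
  classical
  simp [taylorRemainder, pderiv_X, Pi.single_apply]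

theorem map_sub_self_mem_of_taylorRemainder_mem {f : MvPowerSeries ι R}
    (hf : taylorRemainder φ f ∈ displacementIdeal φ ^ 2) : φ f - f ∈ displacementIdeal φ := by
  rw [← sub_add_cancel (φ f - f) (∑ i, (φ (X i) - X i) * pderiv R i f)]
  refine add_mem (Ideal.pow_le_self two_ne_zero hf) (Ideal.sum_mem _ fun i _ => ?_)
  exact Ideal.mul_mem_right _ _ (Ideal.subset_span ⟨i, rfl⟩)

theorem taylorRemainder_coe_mem_sq (P : MvPolynomial ι R) :
    taylorRemainder φ P ∈ displacementIdeal φ ^ 2 := by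
  induction P using MvPolynomial.induction_on with
  | C r => simp [taylorRemainder_C]
  | add P Q hP hQ =>
    rw [MvPolynomial.coe_add, taylorRemainder_add]
    exact add_mem hP hQ
  | mul_X P i hP =>
    rw [MvPolynomial.coe_mul, MvPolynomial.coe_X, taylorRemainder_mul, taylorRemainder_X,
      mul_zero, zero_add]
    exact add_mem (Ideal.mul_mem_left _ _ hP) (pow_two (displacementIdeal φ) ▸ Ideal.mul_mem_mul
      (map_sub_self_mem_of_taylorRemainder_mem φ hP) (Ideal.subset_span ⟨i, rfl⟩))

variable {φ}

theorem taylorRemainder_mem_pow (hφ : ∀ i, φ (X i) ∈ Ideal.span (Set.range X)) {n : ℕ}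
    {f : MvPowerSeries ι R} (hf : f ∈ Ideal.span (Set.range X) ^ (n + 1)) :
    taylorRemainder φ f ∈ Ideal.span (Set.range X) ^ n := by
  have hle := Ideal.pow_le_pow_right (I := Ideal.span (Set.range (X : ι → MvPowerSeries ι R)))
    (Nat.le_succ n)
  refine sub_mem (sub_mem (hle (map_mem_pow_span_X hφ hf)) (hle hf))
    (Ideal.sum_mem _ fun i _ => ?_)
  exact Ideal.mul_mem_left _ _ ((pderiv R i).apply_mem_pow_of_mem_pow_succ _ hf)

theorem taylorRemainder_mem_sq [IsNoetherianRing R] [IsLocalRing R]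
    (hφ : ∀ i, φ (X i) ∈ Ideal.span (Set.range X)) (f : MvPowerSeries ι R) :
    taylorRemainder φ f ∈ displacementIdeal φ ^ 2 := by
  refine Ideal.mem_of_forall_mem_sup_pow span_range_X_le_jacobson fun n => ?_
  rw [← sub_add_cancel f (truncTotal (n + 1) f), taylorRemainder_add]
  exact add_mem (Submodule.mem_sup_right (taylorRemainder_mem_pow hφ
    (sub_truncTotal_mem_pow_span_X _ f))) (Submodule.mem_sup_left (taylorRemainder_coe_mem_sq φ _))

theorem map_sub_self_mem_displacementIdeal [IsNoetherianRing R] [IsLocalRing R]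
    (hφ : ∀ i, φ (X i) ∈ Ideal.span (Set.range X)) (f : MvPowerSeries ι R) :
    φ f - f ∈ displacementIdeal φ :=
  map_sub_self_mem_of_taylorRemainder_mem φ (taylorRemainder_mem_sq hφ f)

end MvPowerSeries

theorem pd_eq_pderiv (i : Fin 2) (f : A) : pd i f = pderiv ℂ i f := by
  ext m
  rw [coeff_pderiv, mul_comm]
  rfl

theorem mA_eq_span_range_X : mA = Ideal.span (Set.range X) := by
  refine le_antisymm (fun f hf => ?_) (Ideal.span_le.mpr ?_)
  · have htrunc : truncTotal 1 f = 0 := by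
      ext x
      rw [coeff_truncTotal_eq_ite, MvPolynomial.coeff_zero]
      split_ifs with hx
      · rw [Nat.lt_one_iff, Finsupp.degree_eq_zero_iff] at hx
        rw [hx, coeff_zero_eq_constantCoeff_apply]
        exact hf
      · rfl
    simpa [htrunc] using sub_truncTotal_mem_pow_span_X 1 f
  · rintro _ ⟨i, rfl⟩
    simp [mA]

theorem ContEndo.map_X_mem_span_range_X {σ : A →ₐ[ℂ] A} (hc : ContEndo σ) (i : Fin 2) :
    σ (X i) ∈ Ideal.span (Set.range X) :=
  mA_eq_span_range_X ▸ hc _ (mA_eq_span_range_X ▸ Ideal.subset_span ⟨i, rfl⟩)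

theorem displacementIdeal_le_span_mul_span_pair {σ : A →ₐ[ℂ] A} {g h₁ h₂ : A}
    (hz₀ : σ (z 0) = z 0 + g * h₁) (hz₁ : σ (z 1) = z 1 + g * h₂) :
    displacementIdeal σ ≤ Ideal.span {g} * Ideal.span {h₁, h₂} := by
  refine Ideal.span_le.mpr ?_
  rintro _ ⟨i, rfl⟩
  fin_cases i
  · show σ (z 0) - z 0 ∈ _
    rw [hz₀, add_sub_cancel_left]
    exact Ideal.mul_mem_mul (Ideal.mem_span_singleton_self g) (Ideal.subset_span (by simp))
  · show σ (z 1) - z 1 ∈ _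
    rw [hz₁, add_sub_cancel_left]
    exact Ideal.mul_mem_mul (Ideal.mem_span_singleton_self g) (Ideal.subset_span (by simp))

theorem IsTypeII.dvd_add_mul_pd {p h₁ h₂ g : A} (hII : IsTypeII p h₁ h₂) (hpg : p ∣ g) :
    p ∣ h₁ * pd 0 g + h₂ * pd 1 g := by
  obtain ⟨a, q₁, q₂, rfl, rfl⟩ := hII
  obtain ⟨w, rfl⟩ := hpg
  simp only [pd_eq_pderiv, Derivation.leibniz, smul_eq_mul]
  exact ⟨(-a * pderiv ℂ 1 p + p * q₁) * pderiv ℂ 0 w + (a * pderiv ℂ 0 p + p * q₂) * pderiv ℂ 1 w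
    + w * (q₁ * pderiv ℂ 0 p + q₂ * pderiv ℂ 1 p), by ring⟩

theorem exists_map_eq_mul_one_add {σ : A →ₐ[ℂ] A} (hc : ContEndo σ) {g h₁ h₂ p : A}
    (hz₀ : σ (z 0) = z 0 + g * h₁) (hz₁ : σ (z 1) = z 1 + g * h₂) (hpg : p ∣ g)
    (hII : IsTypeII p h₁ h₂) : ∃ t, σ g = g * (1 + p * t) := by
  have hrem := Ideal.pow_right_mono
    ((displacementIdeal_le_span_mul_span_pair hz₀ hz₁).trans Ideal.mul_le_left) 2
    (taylorRemainder_mem_sq hc.map_X_mem_span_range_X g)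
  rw [Ideal.span_singleton_pow, Ideal.mem_span_singleton] at hrem
  obtain ⟨u, hu⟩ := hrem
  obtain ⟨c, hpc⟩ := hII.dvd_add_mul_pd hpg
  obtain ⟨w, rfl⟩ := hpg
  refine ⟨c + w * u, ?_⟩
  have hΔ₀ : σ (X 0) - X 0 = p * w * h₁ := by rw [← z, hz₀]; ring
  have hΔ₁ : σ (X 1) - X 1 = p * w * h₂ := by rw [← z, hz₁]; ring
  rw [taylorRemainder, Fin.sum_univ_two, hΔ₀, hΔ₁, ← pd_eq_pderiv, ← pd_eq_pderiv] at hu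
  linear_combination hu + p * w * hpc

theorem stmt4_general (σ : A →ₐ[ℂ] A) (hc : ContEndo ⇑σ)
    (g h₁ h₂ : A) (hdec : IsDecomposition ⇑σ g h₁ h₂)
    (p : A) (hp : Prime p) (hpg : p ∣ g) (hII : IsTypeII p h₁ h₂) :
    ∀ n : ℕ, 1 ≤ n → ∃ hn1 hn2 : A,
      (⇑σ)^[n] (z 0) = z 0 + g * hn1 ∧
      (⇑σ)^[n] (z 1) = z 1 + g * hn2 ∧
      IsRelPrime hn1 hn2 ∧
      Ideal.span {hn1, hn2} = Ideal.span {h₁, h₂} ∧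
      hn1 - (n : A) * h₁ ∈ Ideal.span {p} * Ideal.span {h₁, h₂} ∧
      hn2 - (n : A) * h₂ ∈ Ideal.span {p} * Ideal.span {h₁, h₂} := by
  obtain ⟨-, hrel, hz₀, hz₁⟩ := hdec
  have hmove : ∀ x, σ x - x ∈ Ideal.span {p} * Ideal.span {h₁, h₂} := fun x =>
    Ideal.mul_mono_left (Ideal.span_singleton_le_span_singleton.mpr hpg)
      (displacementIdeal_le_span_mul_span_pair hz₀ hz₁
        (map_sub_self_mem_displacementIdeal hc.map_X_mem_span_range_X x))
  obtain ⟨t, ht⟩ := exists_map_eq_mul_one_add hc hz₀ hz₁ hpg hII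
  intro n hn
  obtain ⟨k₁, hk₁, hk₁h⟩ := exists_iterate_eq_add_mul σ hmove ht hz₀ (Ideal.subset_span (by simp)) n
  obtain ⟨k₂, hk₂, hk₂h⟩ := exists_iterate_eq_add_mul σ hmove ht hz₁ (Ideal.subset_span (by simp)) n
  have hunit : IsUnit (n : A) := by
    rw [isUnit_iff_constantCoeff, map_natCast, isUnit_iff_ne_zero, Nat.cast_ne_zero]
    omega
  have hpJ : Ideal.span {p} ≤ Ideal.jacobson ⊥ :=
    ((Ideal.span_singleton_le_iff_mem _).mpr ((IsLocalRing.mem_maximalIdeal _).mpr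
      hp.not_isUnit)).trans (IsLocalRing.maximalIdeal_le_jacobson _)
  have hspan := Ideal.span_pair_eq_of_sub_mem hpJ hunit hk₁h hk₂h
  exact ⟨k₁, k₂, hk₁, hk₂, hrel.of_span_pair_le hspan.ge, hspan, hk₁h, hk₂h⟩

/-- If `σ` is a nontrivial continuous endomorphism of `A` with decomposition `(g,h₁,h₂)`
and some prime `p ∣ g` is of type II relative to `σ`, then for every `n ≥ 1` there are
`hₙ₁, hₙ₂` with `σⁿ zᵢ = zᵢ + g·hₙᵢ`, `hₙ₁, hₙ₂` relatively prime,
`(hₙ₁,hₙ₂) = (h₁,h₂)` and `hₙᵢ − n·hᵢ ∈ (p)·(h₁,h₂)`. -/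
theorem stmt4 (σ : A →ₐ[ℂ] A) (hnt : ⇑σ ≠ id) (hc : ContEndo ⇑σ)
    (g h₁ h₂ : A) (hdec : IsDecomposition ⇑σ g h₁ h₂)
    (p : A) (hp : Prime p) (hpg : p ∣ g) (hII : IsTypeII p h₁ h₂) :
    ∀ n : ℕ, 1 ≤ n → ∃ hn1 hn2 : A,
      (⇑σ)^[n] (z 0) = z 0 + g * hn1 ∧
      (⇑σ)^[n] (z 1) = z 1 + g * hn2 ∧
      IsRelPrime hn1 hn2 ∧
      Ideal.span {hn1, hn2} = Ideal.span {h₁, h₂} ∧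
      hn1 - (n : A) * h₁ ∈ Ideal.span {p} * Ideal.span {h₁, h₂} ∧
      hn2 - (n : A) * h₂ ∈ Ideal.span {p} * Ideal.span {h₁, h₂} :=
  stmt4_general σ hc g h₁ h₂ hdec p hp hpg hII

end
end

section
/- Let σ : A → A be a continuous endomorphism of A = ℂ⟦z₁,z₂⟧ of the form σ(z₁) = z₁ + z₁^k·f₁ and σ(z₂) = z₂ + z₁^l·f₂, where k, l ∈ ℕ≥1 ∪ {∞} are not both ∞ (with the convention z₁^∞·f := 0), and where fᵢ ∉ (z₁) (i.e., fᵢ(0,z₂) ≠ 0 in ℂ⟦z₂⟧) whenever the corresponding exponent is finite. Then for any decomposition (g,h₁,h₂) of σ one has max{ m ∈ ℕ : g ∈ (z₁)^m } = min{k,l}, and the prime element z₁ is of type II relative to σ if and only if k > l. -/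
/-!
Let `v` be the `z₁`-adic valuation, i.e. the multiplicity of the prime `z₁`. The hypotheses on
`fᵢ` say exactly that `v (z₁^k·f₁) = k` and `v (z₁^l·f₂) = l`, also for infinite exponents. From
`g·hᵢ = σ(zᵢ) - zᵢ` we get `v g + v h₁ = k` and `v g + v h₂ = l`, while coprimality of `h₁, h₂`
forces `v h₁ = 0` or `v h₂ = 0`. Since `g ≠ 0`, `v g` is finite, so `v g = min k l`, and `l < k`
iff `v h₁ > 0`. Finally `∂z₁/∂z₂ = 0` and `∂z₁/∂z₁ = 1`, so `z₁` is of type II iff `z₁ ∣ h₁`.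
-/

noncomputable section

/-- `z₁^k·f` with exponent `k ∈ ℕ∞`, with the convention `z₁^∞·f = 0`. -/
def xpow (k : ℕ∞) (f : A) : A := if k = ⊤ then 0 else (z 0) ^ k.toNat * f

open MvPowerSeries

section Multiplicity

variable {α : Type*} [CommMonoidWithZero α] {p a b g : α}

theorem IsRelPrime.emultiplicity_eq_zero_or (h : IsRelPrime a b) (hp : ¬IsUnit p) :
    emultiplicity p a = 0 ∨ emultiplicity p b = 0 := by
  by_contra! hne
  exact hp (h (emultiplicity_ne_zero.mp hne.1) (emultiplicity_ne_zero.mp hne.2))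

variable [IsCancelMulZero α]

theorem emultiplicity_eq_min_of_isRelPrime (hp : Prime p) (hab : IsRelPrime a b) :
    emultiplicity p g = min (emultiplicity p (g * a)) (emultiplicity p (g * b)) := by
  rw [emultiplicity_mul hp, emultiplicity_mul hp, min_add_add_left]
  rcases hab.emultiplicity_eq_zero_or hp.not_isUnit with h | h <;> simp [h]

theorem emultiplicity_mul_lt_emultiplicity_mul_iff_dvd (hp : Prime p)
    (hg : FiniteMultiplicity p g) (hab : IsRelPrime a b) :
    emultiplicity p (g * b) < emultiplicity p (g * a) ↔ p ∣ a := by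
  rw [emultiplicity_mul hp, emultiplicity_mul hp,
    ENat.add_lt_add_iff_left (finiteMultiplicity_iff_emultiplicity_ne_top.mp hg),
    ← emultiplicity_ne_zero]
  rcases hab.emultiplicity_eq_zero_or hp.not_isUnit with h | h <;> simp [h, pos_iff_ne_zero]

end Multiplicity

theorem prime_z_zero : Prime (z 0) := by
  have : IsDomain (MvPowerSeries (Fin 1) ℂ) := NoZeroDivisors.to_isDomain _
  rw [z, ← MulEquiv.prime_iff (finSuccEquiv ℂ 1), finSuccEquiv_X_zero]
  exact PowerSeries.X_prime

theorem finiteMultiplicity_z_zero {g : A} (hg : g ≠ 0) : FiniteMultiplicity (z 0) g :=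
  have : IsDomain A := NoZeroDivisors.to_isDomain A
  .of_prime_left prime_z_zero hg

theorem multOrd_eq_multiplicity {p x : A} (hx : FiniteMultiplicity p x) :
    multOrd p x = multiplicity p x := by
  have hset : {m : ℕ | x ∈ Ideal.span {p} ^ m} = Set.Iic (multiplicity p x) := by
    ext m
    simp only [Set.mem_ofPred_eq, Ideal.span_singleton_pow, Ideal.mem_span_singleton,
      Set.mem_Iic, hx.pow_dvd_iff_le_multiplicity]
  rw [multOrd, hset, csSup_Iic]

theorem emultiplicity_z_zero_xpow {k : ℕ∞} {f : A} (hf : k ≠ ⊤ → f ∉ Ideal.span {z 0}) :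
    emultiplicity (z 0) (xpow k f) = k := by
  by_cases hk : k = ⊤
  · rw [xpow, if_pos hk, emultiplicity_zero, hk]
  · rw [xpow, if_neg hk, emultiplicity_mul prime_z_zero,
      emultiplicity_pow_self_of_prime prime_z_zero,
      emultiplicity_eq_zero.mpr (fun h => hf hk (Ideal.mem_span_singleton.mpr h)), add_zero,
      ENat.natCast_toNat hk]

theorem isTypeII_z_zero_iff (h₁ h₂ : A) : IsTypeII (z 0) h₁ h₂ ↔ z 0 ∣ h₁ := by
  simp only [IsTypeII, pd_eq_pderiv, z, pderiv_X_self,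
    pderiv_X_of_ne (by decide : (0 : Fin 2) ≠ 1)]
  constructor
  · rintro ⟨a, q₁, q₂, rfl, -⟩
    simp
  · rintro ⟨c, rfl⟩
    exact ⟨h₂, c, 0, by simp, by simp⟩

theorem stmt9_general (σ : A →ₐ[ℂ] A) (k l : ℕ∞) (f₁ f₂ : A)
    (hf₁ : k ≠ ⊤ → f₁ ∉ Ideal.span {z 0})
    (hf₂ : l ≠ ⊤ → f₂ ∉ Ideal.span {z 0})
    (h1 : σ (z 0) = z 0 + xpow k f₁)
    (h2 : σ (z 1) = z 1 + xpow l f₂) :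
    ∀ g h₁ h₂ : A, IsDecomposition ⇑σ g h₁ h₂ →
      (multOrd (z 0) g : ℕ∞) = min k l ∧ (IsTypeII (z 0) h₁ h₂ ↔ l < k) := by
  rintro g h₁ h₂ ⟨hg, hrel, hσ₁, hσ₂⟩
  have e₁ : g * h₁ = xpow k f₁ := add_left_cancel (hσ₁.symm.trans h1)
  have e₂ : g * h₂ = xpow l f₂ := add_left_cancel (hσ₂.symm.trans h2)
  have hfin := finiteMultiplicity_z_zero hg
  rw [multOrd_eq_multiplicity hfin, ← hfin.emultiplicity_eq_multiplicity, isTypeII_z_zero_iff,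
    ← emultiplicity_z_zero_xpow hf₁, ← emultiplicity_z_zero_xpow hf₂, ← e₁, ← e₂]
  exact ⟨emultiplicity_eq_min_of_isRelPrime prime_z_zero hrel,
    (emultiplicity_mul_lt_emultiplicity_mul_iff_dvd prime_z_zero hfin hrel).symm⟩

/-- If `σ(z₁) = z₁ + z₁^k·f₁`, `σ(z₂) = z₂ + z₁^l·f₂` with `k, l ∈ ℕ≥1 ∪ {∞}` not both `∞`
and `fᵢ ∉ (z₁)` when the exponent is finite, then for any decomposition `(g,h₁,h₂)` of `σ`
one has `max{m : g ∈ (z₁)^m} = min{k,l}`, and `z₁` is of type II relative to `σ` iff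
`k > l`. -/
theorem stmt9 (σ : A →ₐ[ℂ] A) (hc : ContEndo ⇑σ)
    (k l : ℕ∞) (hk : 1 ≤ k) (hl : 1 ≤ l) (hkl : ¬(k = ⊤ ∧ l = ⊤))
    (f₁ f₂ : A)
    (hf₁ : k ≠ ⊤ → f₁ ∉ Ideal.span {z 0})
    (hf₂ : l ≠ ⊤ → f₂ ∉ Ideal.span {z 0})
    (h1 : σ (z 0) = z 0 + xpow k f₁)
    (h2 : σ (z 1) = z 1 + xpow l f₂) :
    ∀ g h₁ h₂ : A, IsDecomposition ⇑σ g h₁ h₂ →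
      (multOrd (z 0) g : ℕ∞) = min k l ∧ (IsTypeII (z 0) h₁ h₂ ↔ l < k) :=
  stmt9_general σ k l f₁ f₂ hf₁ hf₂ h1 h2

end
end
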